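/- The Klein bottle group ⟨a, b : b·a·b⁻¹ = a⁻¹⟩ is residually nilpotent: the intersection ⋂_{n≥1} Γ_n of its lower central series is trivial. -/

import Mathlib

/-- The single relation `b·a·b⁻¹·a = 1`, i.e. `b·a·b⁻¹ = a⁻¹`, of the Klein bottle group,
where `a = FreeGroup.of 0` and `b = FreeGroup.of 1`. -/
def kleinRels : Set (FreeGroup (Fin 2)) :=
  {FreeGroup.of 1 * FreeGroup.of 0 * (FreeGroup.of 1)⁻¹ * FreeGroup.of 0}

/-- The Klein bottle group `π₁(𝕂) = ⟨a, b : b·a·b⁻¹ = a⁻¹⟩`. -/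
abbrev KleinBottleGroup := PresentedGroup kleinRels

/-!
Send `a ↦ (1, 0)` and `b ↦ (0, 1)` in the semidirect product `ℤ ⋊ ℤ`, where `ℤ` acts by inversion.
This is injective: the inverse map `(m, n) ↦ aᵐ bⁿ` is a homomorphism because `bⁿ a b⁻ⁿ = a^((-1)^n)`.
In `ℤ ⋊ ℤ` the commutator of `(m, n)` and `(m', n')` is `(m' ((-1)^n - 1) - m ((-1)^n' - 1), 0)`,
so the subgroups `{(m, n) : 2ᵏ ∣ m, 2ᵏ ∣ n}` form a descending central series. It bounds the lower
central series from above, and its intersection is trivial.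
-/

open Multiplicative SemidirectProduct
open scoped commutatorElement

theorem MulAut.zpow_apply_eq_zpow_negOnePow {G : Type*} [Group G] {σ : MulAut G} {x : G}
    (hσ : σ x = x⁻¹) (n : ℤ) : (σ ^ n) x = x ^ (n.negOnePow : ℤ) := by
  have hσ_inv : σ⁻¹ x = x⁻¹ := by
    rw [MulAut.inv_apply, MulEquiv.symm_apply_eq, map_inv, hσ, inv_inv]
  induction n using Int.induction_on with
  | zero => simp
  | succ n ih =>
    rw [zpow_add_one, MulAut.mul_apply, hσ, map_inv, ih]
    simp [Int.negOnePow_succ, zpow_neg]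
  | pred n ih =>
    rw [zpow_sub_one, MulAut.mul_apply, hσ_inv, map_inv, ih]
    simp [Int.negOnePow_sub, zpow_neg]

theorem Int.two_dvd_negOnePow_sub_one (n : ℤ) : 2 ∣ (n.negOnePow : ℤ) - 1 := by
  rcases Int.units_eq_one_or n.negOnePow with h | h <;> simp [h]

theorem Int.two_pow_succ_dvd_negOnePow_sub_one {k : ℕ} {n : ℤ} (h : 2 ^ k ∣ n) :
    2 ^ (k + 1) ∣ (n.negOnePow : ℤ) - 1 := by
  cases k with
  | zero => exact Int.two_dvd_negOnePow_sub_one n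
  | succ k =>
    have hn : Even n := even_iff_two_dvd.2 ((dvd_pow_self 2 k.succ_ne_zero).trans h)
    simp [Int.negOnePow_even _ hn]

theorem Int.eq_zero_of_forall_two_pow_dvd {n : ℤ} (h : ∀ k : ℕ, 2 ^ k ∣ n) : n = 0 :=
  Int.eq_zero_of_dvd_of_natAbs_lt_natAbs (h n.natAbs) <| by
    rw [Int.natAbs_pow]
    exact Nat.lt_two_pow_self

theorem SemidirectProduct.commutatorElement_right {N G : Type*} [Group N] [CommGroup G]
    {φ : G →* MulAut N} (x y : N ⋊[φ] G) : ⁅x, y⁆.right = 1 := by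
  simp [commutatorElement_def]

theorem Subgroup.iInf_lowerCentralSeries_eq_bot_of_isDescendingCentralSeries {G : Type*}
    [Group G] {H : ℕ → Subgroup G} (hH : IsDescendingCentralSeries H) (h_bot : ⨅ k, H k = ⊥) :
    ⨅ n, (⊤ : Subgroup G).lowerCentralSeries n = ⊥ :=
  eq_bot_iff.2 <| h_bot ▸ iInf_mono (descending_central_series_ge_lower H hH)

theorem Subgroup.iInf_lowerCentralSeries_eq_bot_of_injective {G K : Type*} [Group G] [Group K]
    {f : G →* K} (hf : Function.Injective f)
    (hK : ⨅ n, (⊤ : Subgroup K).lowerCentralSeries n = ⊥) :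
    ⨅ n, (⊤ : Subgroup G).lowerCentralSeries n = ⊥ := by
  refine eq_bot_iff.2 ?_
  have h_map (n : ℕ) : ((⊤ : Subgroup G).lowerCentralSeries n).map f ≤
      (⊤ : Subgroup K).lowerCentralSeries n :=
    (map_lowerCentralSeries ⊤ f n).trans_le (lowerCentralSeries_mono n le_top)
  calc ⨅ n, (⊤ : Subgroup G).lowerCentralSeries n
      ≤ ⨅ n, ((⊤ : Subgroup K).lowerCentralSeries n).comap f :=
        iInf_mono fun n ↦ map_le_iff_le_comap.1 (h_map n)
    _ = f.ker := by rw [← comap_iInf, hK, MonoidHom.comap_bot]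
    _ = ⊥ := (MonoidHom.ker_eq_bot_iff f).2 hf

namespace KleinBottleGroup

def invAction : Multiplicative ℤ →* MulAut (Multiplicative ℤ) :=
  zpowersHom _ (MulEquiv.inv _)

@[simp] theorem toAdd_invAction_apply (g m : Multiplicative ℤ) :
    toAdd (invAction g m) = (toAdd g).negOnePow * toAdd m := by
  rw [invAction, zpowersHom_apply, MulAut.zpow_apply_eq_zpow_negOnePow rfl, toAdd_zpow,
    smul_eq_mul]

abbrev Model := Multiplicative ℤ ⋊[invAction] Multiplicative ℤ

namespace Model

theorem toAdd_mul_left (x y : Model) :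
    toAdd (x * y).left = toAdd x.left + (toAdd x.right).negOnePow * toAdd y.left := by
  rw [mul_left, toAdd_mul, toAdd_invAction_apply]

theorem toAdd_inv_left (x : Model) :
    toAdd x⁻¹.left = -((toAdd x.right).negOnePow * toAdd x.left) := by
  rw [inv_left, toAdd_invAction_apply, toAdd_inv, toAdd_inv, Int.negOnePow_neg, mul_neg]

theorem toAdd_commutatorElement_left (x y : Model) :
    toAdd ⁅x, y⁆.left = toAdd y.left * ((toAdd x.right).negOnePow - 1) -
      toAdd x.left * ((toAdd y.right).negOnePow - 1) := by
  simp only [commutatorElement_def, toAdd_mul_left, toAdd_inv_left, mul_right, inv_right,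
    toAdd_mul, toAdd_inv, Int.negOnePow_add, Int.negOnePow_neg]
  rcases Int.units_eq_one_or (toAdd x.right).negOnePow with hx | hx <;>
    rcases Int.units_eq_one_or (toAdd y.right).negOnePow with hy | hy <;> simp [hx, hy] <;> ring

def dyadicSeries (k : ℕ) : Subgroup Model where
  carrier := {x | 2 ^ k ∣ toAdd x.left ∧ 2 ^ k ∣ toAdd x.right}
  one_mem' := by simp
  mul_mem' := by
    rintro x y ⟨hx_left, hx_right⟩ ⟨hy_left, hy_right⟩
    refine ⟨?_, by simpa using dvd_add hx_right hy_right⟩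
    rw [toAdd_mul_left]
    exact dvd_add hx_left (dvd_mul_of_dvd_right hy_left _)
  inv_mem' := by
    rintro x ⟨hx_left, hx_right⟩
    refine ⟨?_, by simpa using hx_right⟩
    rw [toAdd_inv_left]
    exact (dvd_mul_of_dvd_right hx_left _).neg_right

theorem mem_dyadicSeries {k : ℕ} {x : Model} :
    x ∈ dyadicSeries k ↔ 2 ^ k ∣ toAdd x.left ∧ 2 ^ k ∣ toAdd x.right :=
  Iff.rfl

theorem isDescendingCentralSeries_dyadicSeries :
    Subgroup.IsDescendingCentralSeries dyadicSeries := by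
  refine ⟨eq_top_iff.2 fun x _ ↦ by simp [mem_dyadicSeries], ?_⟩
  rintro x k ⟨hx_left, hx_right⟩ y
  refine ⟨?_, by simp [commutatorElement_right]⟩
  rw [toAdd_commutatorElement_left]
  refine dvd_sub (dvd_mul_of_dvd_right (Int.two_pow_succ_dvd_negOnePow_sub_one hx_right) _) ?_
  rw [pow_succ]
  exact mul_dvd_mul hx_left (Int.two_dvd_negOnePow_sub_one _)

theorem iInf_dyadicSeries_eq_bot : ⨅ k, dyadicSeries k = ⊥ := by
  refine eq_bot_iff.2 fun x hx ↦ ?_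
  have hx' : ∀ k, x ∈ dyadicSeries k := Subgroup.mem_iInf.1 hx
  exact SemidirectProduct.ext (Int.eq_zero_of_forall_two_pow_dvd fun k ↦ (hx' k).1)
    (Int.eq_zero_of_forall_two_pow_dvd fun k ↦ (hx' k).2)

theorem iInf_lowerCentralSeries_eq_bot :
    ⨅ n, (⊤ : Subgroup Model).lowerCentralSeries n = ⊥ :=
  Subgroup.iInf_lowerCentralSeries_eq_bot_of_isDescendingCentralSeries
    isDescendingCentralSeries_dyadicSeries iInf_dyadicSeries_eq_bot

end Model

def a : KleinBottleGroup := PresentedGroup.of 0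

def b : KleinBottleGroup := PresentedGroup.of 1

theorem b_mul_a_mul_b_inv : b * a * b⁻¹ = a⁻¹ :=
  eq_inv_of_mul_eq_one_left <| PresentedGroup.one_of_mem rfl

def toModel : KleinBottleGroup →* Model :=
  PresentedGroup.toGroup (f := ![inl (ofAdd 1), inr (ofAdd 1)]) <| by
    rintro r rfl
    ext <;> simp

def ofModel : Model →* KleinBottleGroup :=
  lift (zpowersHom _ a) (zpowersHom _ b) fun g ↦ by
    refine MonoidHom.ext_mint ?_
    have hconj : MulAut.conj b a = a⁻¹ := b_mul_a_mul_b_inv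
    simp [map_zpow, MulAut.zpow_apply_eq_zpow_negOnePow hconj]

theorem ofModel_comp_toModel : ofModel.comp toModel = MonoidHom.id _ :=
  PresentedGroup.ext fun i ↦ by fin_cases i <;> simp [toModel, ofModel, a, b]

theorem toModel_injective : Function.Injective toModel :=
  Function.LeftInverse.injective (g := ofModel) (DFunLike.congr_fun ofModel_comp_toModel)

end KleinBottleGroup

/-- The Klein bottle group is residually nilpotent: the intersection of its lower
central series is trivial. -/
theorem kleinBottleGroup_residually_nilpotent :
    (⨅ n, (⊤ : Subgroup KleinBottleGroup).lowerCentralSeries n) = ⊥ :=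
  Subgroup.iInf_lowerCentralSeries_eq_bot_of_injective KleinBottleGroup.toModel_injective
    KleinBottleGroup.Model.iInf_lowerCentralSeries_eq_bot
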